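/- The variance of the weaver's distribution W(n,p) equals (Σ_{i=0}^{n-1} 4^i)/(2^n - 1)^2 · p(1-p); explicitly, Σ_{k=0}^{2^n-1} p^{#1(k)}(1-p)^{n-#1(k)} (k/(2^n-1) - p)^2 = ((4^n - 1)/3) / (2^n-1)^2 · p(1-p). -/
import Mathlib

/-- number of ones in the binary representation of `k` -/
def ones (k : ℕ) : ℕ := (Nat.digits 2 k).sum

lemma ones_zero : ones 0 = 0 := by simp [ones]

lemma ones_rec (k : ℕ) (hk : k ≠ 0) : ones k = ones (k / 2) + k % 2 := by
  unfold ones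
  rw [Nat.digits_def' (by norm_num : 1 < 2) (Nat.pos_of_ne_zero hk)]
  simp [add_comm]

lemma ones_le {n k : ℕ} (h : k < 2 ^ n) : ones k ≤ n := by
  induction n generalizing k with
  | zero => interval_cases k; simp [ones_zero]
  | succ n ih =>
    rcases eq_or_ne k 0 with rfl | hk
    · simp [ones_zero]
    · rw [ones_rec k hk]
      have h2 : k / 2 < 2 ^ n := Nat.div_lt_of_lt_mul (by rw [pow_succ] at h; linarith [h])
      have := ih h2
      have := Nat.mod_lt k (show 0 < 2 by norm_num)
      omega

lemma ones_pow_add {n j : ℕ} (h : j < 2 ^ n) : ones (2 ^ n + j) = ones j + 1 := by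
  induction n generalizing j with
  | zero =>
    interval_cases j
    simp [ones_zero, ones_rec 1 one_ne_zero]
  | succ n ih =>
    have hk : 2 ^ (n + 1) + j ≠ 0 := by positivity
    rw [ones_rec _ hk]
    have hdiv : (2 ^ (n + 1) + j) / 2 = 2 ^ n + j / 2 := by
      rw [pow_succ, mul_comm]; omega
    have hmod : (2 ^ (n + 1) + j) % 2 = j % 2 := by
      rw [pow_succ, mul_comm]; omega
    have hj2 : j / 2 < 2 ^ n := by
      rw [pow_succ] at h; omega
    rw [hdiv, hmod, ih hj2]
    rcases eq_or_ne j 0 with rfl | hj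
    · simp [ones_zero]
    · rw [ones_rec j hj]; ring

lemma key (p : ℝ) (n : ℕ) :
    (∑ k ∈ Finset.range (2 ^ n), p ^ (ones k) * (1 - p) ^ (n - ones k) = 1) ∧
    (∑ k ∈ Finset.range (2 ^ n), p ^ (ones k) * (1 - p) ^ (n - ones k) * (k : ℝ)
      = p * (2 ^ n - 1)) ∧
    (∑ k ∈ Finset.range (2 ^ n), p ^ (ones k) * (1 - p) ^ (n - ones k) * (k : ℝ) ^ 2
      = p * (1 - p) * (4 ^ n - 1) / 3 + (p * (2 ^ n - 1)) ^ 2) := by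
  induction n with
  | zero => norm_num [ones_zero]
  | succ n ih =>
    obtain ⟨hA, hB, hC⟩ := ih
    have hsplit : ∀ f : ℕ → ℝ, ∑ k ∈ Finset.range (2 ^ (n + 1)), f k
        = ∑ k ∈ Finset.range (2 ^ n), f k + ∑ k ∈ Finset.range (2 ^ n), f (2 ^ n + k) := by
      intro f
      rw [pow_succ, mul_two, Finset.range_add, Finset.sum_union]
      · congr 1
        rw [Finset.sum_map]
        rfl
      · simp [Finset.disjoint_left, addLeftEmbedding]
        omega
    have hw1 : ∀ k ∈ Finset.range (2 ^ n),
        p ^ (ones k) * (1 - p) ^ (n + 1 - ones k)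
          = (1 - p) * (p ^ (ones k) * (1 - p) ^ (n - ones k)) := by
      intro k hk
      have := ones_le (Finset.mem_range.mp hk)
      rw [show n + 1 - ones k = (n - ones k) + 1 by omega, pow_succ]
      ring
    have hw2 : ∀ k ∈ Finset.range (2 ^ n),
        p ^ (ones (2 ^ n + k)) * (1 - p) ^ (n + 1 - ones (2 ^ n + k))
          = p * (p ^ (ones k) * (1 - p) ^ (n - ones k)) := by
      intro k hk
      have hlt := Finset.mem_range.mp hk
      have := ones_le hlt
      rw [ones_pow_add hlt, show n + 1 - (ones k + 1) = n - ones k by omega, pow_succ]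
      ring
    have cast2 : ((2 ^ n : ℕ) : ℝ) = 2 ^ n := by push_cast; ring
    have h4 : forall m : Nat, (4:Real) ^ m = (2 ^ m) ^ 2 := fun m => by
      rw [show (4:Real) = 2 ^ 2 by norm_num, ← pow_mul, ← pow_mul, mul_comm]
    refine ⟨?_, ?_, ?_⟩
    · rw [hsplit]
      rw [Finset.sum_congr rfl hw1, Finset.sum_congr rfl hw2,
        ← Finset.mul_sum, ← Finset.mul_sum, hA]
      ring
    · rw [hsplit]
      have e1 : ∑ k ∈ Finset.range (2 ^ n),
          p ^ (ones k) * (1 - p) ^ (n + 1 - ones k) * (k : Real)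
          = ∑ k ∈ Finset.range (2 ^ n),
            (1 - p) * (p ^ (ones k) * (1 - p) ^ (n - ones k) * (k : Real)) :=
        Finset.sum_congr rfl (fun k hk => by rw [hw1 k hk]; ring)
      have e2 : ∑ k ∈ Finset.range (2 ^ n),
          p ^ (ones (2 ^ n + k)) * (1 - p) ^ (n + 1 - ones (2 ^ n + k)) * ((2 ^ n + k : Nat) : Real)
          = ∑ k ∈ Finset.range (2 ^ n),
            (p * (p ^ (ones k) * (1 - p) ^ (n - ones k) * (k : Real))
              + p * 2 ^ n * (p ^ (ones k) * (1 - p) ^ (n - ones k))) :=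
        Finset.sum_congr rfl (fun k hk => by rw [hw2 k hk]; push_cast; ring)
      rw [e1, e2, Finset.sum_add_distrib, ← Finset.mul_sum, ← Finset.mul_sum,
        ← Finset.mul_sum, hA, hB, pow_succ]
      ring
    · rw [hsplit]
      have e1 : ∑ k ∈ Finset.range (2 ^ n),
          p ^ (ones k) * (1 - p) ^ (n + 1 - ones k) * (k : Real) ^ 2
          = ∑ k ∈ Finset.range (2 ^ n),
            (1 - p) * (p ^ (ones k) * (1 - p) ^ (n - ones k) * (k : Real) ^ 2) :=
        Finset.sum_congr rfl (fun k hk => by rw [hw1 k hk]; ring)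
      have e2 : ∑ k ∈ Finset.range (2 ^ n),
          p ^ (ones (2 ^ n + k)) * (1 - p) ^ (n + 1 - ones (2 ^ n + k)) * ((2 ^ n + k : Nat) : Real) ^ 2
          = ∑ k ∈ Finset.range (2 ^ n),
            (p * (p ^ (ones k) * (1 - p) ^ (n - ones k) * (k : Real) ^ 2)
              + p * 2 * 2 ^ n * (p ^ (ones k) * (1 - p) ^ (n - ones k) * (k : Real))
              + p * (2 ^ n) ^ 2 * (p ^ (ones k) * (1 - p) ^ (n - ones k))) :=
        Finset.sum_congr rfl (fun k hk => by rw [hw2 k hk]; push_cast; ring)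
      rw [e1, e2, Finset.sum_add_distrib, Finset.sum_add_distrib, ← Finset.mul_sum,
        ← Finset.mul_sum, ← Finset.mul_sum, ← Finset.mul_sum, hA, hB, hC,
        h4, h4, pow_succ]
      ring

theorem weaver_variance (n : ℕ) (hn : 1 ≤ n) (p : ℝ) (hp0 : 0 ≤ p) (hp1 : p ≤ 1) :
    ∑ k ∈ Finset.range (2 ^ n),
      p ^ (ones k) * (1 - p) ^ (n - ones k) * ((k : ℝ) / (2 ^ n - 1) - p) ^ 2 =
      ((4 ^ n - 1) / 3) / ((2 ^ n - 1) ^ 2 : ℝ) * (p * (1 - p)) := by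
  obtain ⟨hA, hB, hC⟩ := key p n
  have hM : (2 : ℝ) ^ n - 1 ≠ 0 := by
    have : (2:ℝ) ^ 1 ≤ 2 ^ n := pow_le_pow_right₀ (by norm_num) hn
    norm_num at this ⊢
    linarith
  have expand : ∀ k ∈ Finset.range (2 ^ n),
      p ^ (ones k) * (1 - p) ^ (n - ones k) * ((k : ℝ) / (2 ^ n - 1) - p) ^ 2
        = (1 / (2 ^ n - 1) ^ 2) * (p ^ (ones k) * (1 - p) ^ (n - ones k) * (k : ℝ) ^ 2)
          - (2 * p / (2 ^ n - 1)) * (p ^ (ones k) * (1 - p) ^ (n - ones k) * (k : ℝ))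
          + p ^ 2 * (p ^ (ones k) * (1 - p) ^ (n - ones k)) := by
    intro k _
    field_simp
    ring
  rw [Finset.sum_congr rfl expand, Finset.sum_add_distrib, Finset.sum_sub_distrib,
    ← Finset.mul_sum, ← Finset.mul_sum, ← Finset.mul_sum, hA, hB, hC]
  field_simp
  ring
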